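/- Let n ≥ 3 and 1 ≤ p ≤ n-1 be integers. If κ ∈ ℝ^{n-1} lies in the topological closure of the Gårding cone Γ_p^+ and σ_p(κ) > 0, then κ ∈ Γ_p^+, i.e. σ_j(κ) > 0 for all 1 ≤ j ≤ p. -/

import Mathlib

/-- The `j`-th elementary symmetric polynomial of `κ = (κ_1, …, κ_m) ∈ ℝ^m`,
with the conventions `σ_0 = 1` and `σ_j = 0` for `j > m`. -/
noncomputable def esymm (m j : ℕ) (κ : Fin m → ℝ) : ℝ :=
  ∑ s ∈ Finset.powersetCard j (Finset.univ : Finset (Fin m)), ∏ i ∈ s, κ i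

/-- `σ_{k;i}(κ)`: the `k`-th elementary symmetric polynomial of the `m - 1` numbers
`κ_1, …, κ_{i-1}, κ_{i+1}, …, κ_m`. -/
noncomputable def esymmWithout (m k : ℕ) (i : Fin m) (κ : Fin m → ℝ) : ℝ :=
  ∑ s ∈ Finset.powersetCard k ((Finset.univ : Finset (Fin m)).erase i), ∏ j ∈ s, κ j

/-- The Gårding cone `Γ_k^+ = {κ ∈ ℝ^m : σ_j(κ) > 0 for j = 1, …, k}`. -/
def gardingCone (m k : ℕ) : Set (Fin m → ℝ) :=
  {κ | ∀ j, 1 ≤ j → j ≤ k → 0 < esymm m j κ}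

/-!
Newton's inequalities say that `W_k = k! (m-k)! σ_k` is log-concave: `W_k W_{k+2} ≤ W_{k+1}²`.
They hold for all real `κ`: differentiating and reversing the real-rooted polynomial
`∏ (X + κ_i)` preserves real-rootedness (Rolle) and ends in a real-rooted quadratic, whose
discriminant is `W_{k+1}² - W_k W_{k+2}` up to a positive factor. On `Γ_p`, where
`W_0, …, W_p > 0`, log-concavity makes `W_{i+1} / W_i` decreasing, whence
`W_p W_0^{p-j} ≤ W_j W_1^{p-j}`. This is a closed condition, so it persists on the closure of
`Γ_p`, where moreover `W_1, W_j ≥ 0`; then `σ_p > 0` forces `σ_j > 0`.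
-/

open Polynomial
open scoped Nat

namespace Polynomial

theorem factorial_mul_coeff_iterate_derivative {R : Type*} [Semiring R] (p : R[X]) (k i : ℕ) :
    (i ! : R) * (derivative^[k] p).coeff i = (k + i)! * p.coeff (k + i) := by
  rw [coeff_iterate_derivative, nsmul_eq_mul, ← mul_assoc, ← Nat.cast_mul, Nat.add_comm k,
    ← Nat.factorial_mul_descFactorial (Nat.le_add_left k i), Nat.add_sub_cancel]

theorem natDegree_iterate_derivative_eq {R : Type*} [Semiring R] [IsAddTorsionFree R]
    (p : R[X]) (k : ℕ) : (derivative^[k] p).natDegree = p.natDegree - k := by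
  induction k with
  | zero => rfl
  | succ k ih => rw [Function.iterate_succ_apply', natDegree_derivative, ih, Nat.sub_sub]

theorem Splits.derivative {f : ℝ[X]} (hf : f.Splits) : f.derivative.Splits := by
  rw [splits_iff_card_roots] at hf ⊢
  have := card_roots_le_derivative f
  have := f.derivative.card_roots'
  rw [natDegree_derivative] at *
  omega

theorem Splits.iterate_derivative {f : ℝ[X]} (hf : f.Splits) (k : ℕ) :
    (Polynomial.derivative^[k] f).Splits := by
  induction k with
  | zero => exact hf
  | succ k ih => rw [Function.iterate_succ_apply']; exact ih.derivative

theorem Splits.reverse {K : Type*} [Field K] {f : K[X]} (hf : f.Splits) : f.reverse.Splits := by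
  induction hf using Submonoid.closure_induction with
  | mem g hg =>
    rcases hg with ⟨a, rfl⟩ | ⟨a, rfl⟩
    · simp
    · exact .of_natDegree_le_one ((reverse_natDegree_le _).trans (natDegree_X_add_C a).le)
  | one => rw [← C_1, reverse_C]; exact .C 1
  | mul g h _ _ hg hh => rw [reverse_mul_of_domain]; exact hg.mul hh

theorem Splits.discrim_nonneg {K : Type*} [Field K] [LinearOrder K] [IsStrictOrderedRing K]
    {q : K[X]} (hq : q.Splits) (hdeg : q.natDegree ≤ 2) :
    0 ≤ discrim (q.coeff 2) (q.coeff 1) (q.coeff 0) := by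
  by_cases h0 : q.degree = 0
  · have hq0 : q.natDegree = 0 := natDegree_eq_of_degree_eq_some h0
    simp [discrim, coeff_eq_zero_of_natDegree_lt, hq0]
  obtain ⟨x, hx⟩ := hq.exists_eval_eq_zero h0
  rw [eval_eq_sum_range' (n := 3) (by omega)] at hx
  simp only [Finset.sum_range_succ, Finset.sum_range_zero] at hx
  rw [discrim_eq_sq_of_quadratic_eq_zero (x := x) (by linear_combination hx)]
  positivity

theorem Splits.newton_inequality {f : ℝ[X]} (hf : f.Splits) {a b : ℕ} (hdeg : f.natDegree = a + b + 2) :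
    (a ! * (b + 2)! * f.coeff a) * ((a + 2)! * b ! * f.coeff (a + 2)) ≤
      ((a + 1)! * (b + 1)! * f.coeff (a + 1)) ^ 2 := by
  have hgf := factorial_mul_coeff_iterate_derivative f a
  have hg : (Polynomial.derivative^[a] f).natDegree = b + 2 := by
    rw [natDegree_iterate_derivative_eq, hdeg]; omega
  have hq : (Polynomial.derivative^[b] (Polynomial.derivative^[a] f).reverse).natDegree ≤ 2 :=
    (natDegree_iterate_derivative _ _).trans (by grind [reverse_natDegree_le])
  have hdisc := ((hf.iterate_derivative a).reverse.iterate_derivative b).discrim_nonneg hq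
  generalize Polynomial.derivative^[a] f = g at hgf hg hdisc
  have hqg (i : ℕ) (hi : i ≤ 2) : (i ! : ℝ) * (Polynomial.derivative^[b] g.reverse).coeff i =
      (b + i)! * g.coeff (2 - i) := by
    rw [factorial_mul_coeff_iterate_derivative, coeff_reverse, hg,
      revAt_le (show b + i ≤ b + 2 by omega), show b + 2 - (b + i) = 2 - i by omega]
  generalize Polynomial.derivative^[b] g.reverse = q at hqg hdisc
  have q0 := hqg 0 (by norm_num)
  have q1 := hqg 1 (by norm_num)
  have q2 := hqg 2 (by norm_num)
  have g0 := hgf 0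
  have g1 := hgf 1
  have g2 := hgf 2
  simp only [Nat.factorial_zero, Nat.factorial_one, Nat.factorial_two, Nat.cast_one,
    Nat.cast_ofNat, one_mul, add_zero, Nat.sub_zero, Nat.sub_self] at q0 q1 q2 g0 g1 g2
  rw [discrim, q1, g1, q0, show q.coeff 2 = (b + 2)! * g.coeff 0 / 2 by linarith, g0,
    show g.coeff 2 = (a + 2)! * f.coeff (a + 2) / 2 by linarith] at hdisc
  linear_combination hdisc

end Polynomial

theorem esymm_zero (m : ℕ) (κ : Fin m → ℝ) : esymm m 0 κ = 1 := by
  simp [esymm]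

theorem esymm_eq_zero_of_lt {m k : ℕ} (h : m < k) (κ : Fin m → ℝ) : esymm m k κ = 0 := by
  rw [esymm, Finset.powersetCard_eq_empty.mpr (by rwa [Finset.card_univ, Fintype.card_fin]),
    Finset.sum_empty]

theorem continuous_esymm (m k : ℕ) : Continuous (esymm m k) := by
  unfold esymm
  fun_prop

theorem coeff_prod_X_add_C_eq_esymm {m i : ℕ} (hi : i ≤ m) (κ : Fin m → ℝ) :
    (∏ j, (X + C (κ j))).coeff i = esymm m (m - i) κ := by
  rw [Finset.prod_X_add_C_coeff _ _ (by simpa using hi), Finset.card_univ, Fintype.card_fin]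
  rfl

/-- `k! (m-k)! σ_k = m! σ_k / C(m,k)`: the normalization in which Newton's inequalities carry
no constants. -/
noncomputable def scaledEsymm (m k : ℕ) (κ : Fin m → ℝ) : ℝ :=
  (k ! * (m - k)! : ℝ) * esymm m k κ

theorem continuous_scaledEsymm (m k : ℕ) : Continuous (scaledEsymm m k) :=
  continuous_const.mul (continuous_esymm m k)

theorem scaledEsymm_pos_iff {m k : ℕ} {κ : Fin m → ℝ} :
    0 < scaledEsymm m k κ ↔ 0 < esymm m k κ :=
  mul_pos_iff_of_pos_left (by positivity)

theorem scaledEsymm_mul_le_sq (m k : ℕ) (κ : Fin m → ℝ) :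
    scaledEsymm m k κ * scaledEsymm m (k + 2) κ ≤ scaledEsymm m (k + 1) κ ^ 2 := by
  rcases lt_or_ge m (k + 2) with hm | hm
  · have : scaledEsymm m (k + 2) κ = 0 := by simp [scaledEsymm, esymm_eq_zero_of_lt hm]
    rw [this, mul_zero]
    positivity
  obtain ⟨b, rfl⟩ : ∃ b, m = b + k + 2 := ⟨m - k - 2, by omega⟩
  have hsplit : (∏ j, (X + C (κ j))).Splits := Splits.prod fun j _ => Splits.X_add_C (κ j)
  have hdeg : (∏ j, (X + C (κ j))).natDegree = b + k + 2 := by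
    rw [natDegree_prod_of_monic _ _ fun j _ => monic_X_add_C (κ j)]
    simp
  have := hsplit.newton_inequality hdeg
  simp only [scaledEsymm]
  rw [coeff_prod_X_add_C_eq_esymm (by omega), coeff_prod_X_add_C_eq_esymm (by omega),
    coeff_prod_X_add_C_eq_esymm (by omega)] at this
  rw [show b + k + 2 - k = b + 2 by omega, show b + k + 2 - (k + 1) = b + 1 by omega,
    show b + k + 2 - (k + 2) = b by omega]
  rw [show b + k + 2 - b = k + 2 by omega, show b + k + 2 - (b + 1) = k + 1 by omega,
    show b + k + 2 - (b + 2) = k by omega] at this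
  linear_combination this

def IsLogConcaveUpTo (p : ℕ) (w : ℕ → ℝ) : Prop :=
  ∀ k, k + 2 ≤ p → w k * w (k + 2) ≤ w (k + 1) ^ 2

namespace IsLogConcaveUpTo

variable {p : ℕ} {w : ℕ → ℝ}

theorem succ_mul_zero_le (hw : IsLogConcaveUpTo p w) (hpos : ∀ k ≤ p, 0 < w k) {i : ℕ}
    (hi : i < p) : w (i + 1) * w 0 ≤ w 1 * w i := by
  induction i with
  | zero => rw [mul_comm]
  | succ i ih =>
    refine le_of_mul_le_mul_right ?_ (hpos i (by omega))
    calc w (i + 2) * w 0 * w i = w i * w (i + 2) * w 0 := by ring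
      _ ≤ w (i + 1) ^ 2 * w 0 := mul_le_mul_of_nonneg_right (hw i hi) (hpos 0 (by omega)).le
      _ = w (i + 1) * (w (i + 1) * w 0) := by ring
      _ ≤ w (i + 1) * (w 1 * w i) :=
          mul_le_mul_of_nonneg_left (ih (by omega)) (hpos _ hi.le).le
      _ = w 1 * w (i + 1) * w i := by ring

theorem add_mul_zero_pow_le (hw : IsLogConcaveUpTo p w) (hpos : ∀ k ≤ p, 0 < w k) {j d : ℕ}
    (h : j + d ≤ p) : w (j + d) * w 0 ^ d ≤ w j * w 1 ^ d := by
  induction d with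
  | zero => simp
  | succ d ih =>
    calc w (j + d + 1) * w 0 ^ (d + 1) = w (j + d + 1) * w 0 * w 0 ^ d := by ring
      _ ≤ w 1 * w (j + d) * w 0 ^ d :=
          mul_le_mul_of_nonneg_right (hw.succ_mul_zero_le hpos (by omega))
            (pow_pos (hpos 0 (by omega)) d).le
      _ = w 1 * (w (j + d) * w 0 ^ d) := by ring
      _ ≤ w 1 * (w j * w 1 ^ d) :=
          mul_le_mul_of_nonneg_left (ih (by omega)) (hpos 1 (by omega)).le
      _ = w j * w 1 ^ (d + 1) := by ring

end IsLogConcaveUpTo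

theorem isLogConcaveUpTo_scaledEsymm (m p : ℕ) (κ : Fin m → ℝ) :
    IsLogConcaveUpTo p (scaledEsymm m · κ) :=
  fun k _ => scaledEsymm_mul_le_sq m k κ

theorem scaledEsymm_zero_pos (m : ℕ) (κ : Fin m → ℝ) : 0 < scaledEsymm m 0 κ := by
  rw [scaledEsymm_pos_iff, esymm_zero]
  exact one_pos

theorem scaledEsymm_pos_of_mem_gardingCone {m p k : ℕ} {κ : Fin m → ℝ}
    (hκ : κ ∈ gardingCone m p) (hk : k ≤ p) : 0 < scaledEsymm m k κ := by
  rcases Nat.eq_zero_or_pos k with rfl | hk0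
  · exact scaledEsymm_zero_pos m κ
  · exact scaledEsymm_pos_iff.mpr (hκ k hk0 hk)

theorem scaledEsymm_mul_pow_le_of_mem_gardingCone {m p j : ℕ} {κ : Fin m → ℝ}
    (hκ : κ ∈ gardingCone m p) (hj : j ≤ p) :
    scaledEsymm m p κ * scaledEsymm m 0 κ ^ (p - j) ≤
      scaledEsymm m j κ * scaledEsymm m 1 κ ^ (p - j) := by
  have := (isLogConcaveUpTo_scaledEsymm m p κ).add_mul_zero_pow_le
    (fun k hk => scaledEsymm_pos_of_mem_gardingCone hκ hk) (show j + (p - j) ≤ p by omega)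
  rwa [Nat.add_sub_cancel' hj] at this

theorem scaledEsymm_nonneg_of_mem_closure {m p k : ℕ} {κ : Fin m → ℝ}
    (hκ : κ ∈ closure (gardingCone m p)) (hk : k ≤ p) : 0 ≤ scaledEsymm m k κ :=
  le_on_closure (fun _ hx => (scaledEsymm_pos_of_mem_gardingCone hx hk).le)
    continuousOn_const (continuous_scaledEsymm m k).continuousOn hκ

theorem scaledEsymm_mul_pow_le_of_mem_closure {m p j : ℕ} {κ : Fin m → ℝ}
    (hκ : κ ∈ closure (gardingCone m p)) (hj : j ≤ p) :
    scaledEsymm m p κ * scaledEsymm m 0 κ ^ (p - j) ≤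
      scaledEsymm m j κ * scaledEsymm m 1 κ ^ (p - j) := by
  have hcont := continuous_scaledEsymm m
  exact le_on_closure (fun _ hx => scaledEsymm_mul_pow_le_of_mem_gardingCone hx hj)
    ((hcont p).mul ((hcont 0).pow _)).continuousOn
    ((hcont j).mul ((hcont 1).pow _)).continuousOn hκ

theorem stmt_3_general (n p : ℕ)
    (κ : Fin (n - 1) → ℝ) (hκ : κ ∈ closure (gardingCone (n - 1) p))
    (hσp : 0 < esymm (n - 1) p κ) :
    κ ∈ gardingCone (n - 1) p := by
  intro j hj1 hjp
  have hlhs : 0 < scaledEsymm (n - 1) p κ * scaledEsymm (n - 1) 0 κ ^ (p - j) :=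
    mul_pos (scaledEsymm_pos_iff.mpr hσp) (pow_pos (scaledEsymm_zero_pos _ κ) _)
  have hσ1 : 0 ≤ scaledEsymm (n - 1) 1 κ ^ (p - j) :=
    pow_nonneg (scaledEsymm_nonneg_of_mem_closure hκ (by omega)) _
  exact scaledEsymm_pos_iff.mp
    (pos_of_mul_pos_left (hlhs.trans_le (scaledEsymm_mul_pow_le_of_mem_closure hκ hjp)) hσ1)

/-- If `κ` lies in the closure of `Γ_p^+` and `σ_p(κ) > 0`, then `κ ∈ Γ_p^+`. -/
theorem stmt_3 (n p : ℕ) (hn : 3 ≤ n) (hp1 : 1 ≤ p) (hp2 : p ≤ n - 1)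
    (κ : Fin (n - 1) → ℝ) (hκ : κ ∈ closure (gardingCone (n - 1) p))
    (hσp : 0 < esymm (n - 1) p κ) :
    κ ∈ gardingCone (n - 1) p :=
  stmt_3_general n p κ hκ hσp
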